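/- After an eager garbage-collection step removing the maximal set of removable bindings from the top letrec, no further (gc) step is applicable to the top letrec of the resulting expression. -/
import Mathlib


variable {Var E : Type} [DecidableEq Var] [DecidableEq E]

/-- For an expression `letrec B in t` (with `fv` giving the free variables of
binding expressions and `fv t` those of the body), a subset `G ⊆ B` of the
bindings is *removable* if no binding variable of `G` occurs free in `t` or in
any binding expression of `B \ G`. -/
def Removable (fv : E → Finset Var) (B : Finset (Var × E)) (t : E)
    (G : Finset (Var × E)) : Prop :=
  G ⊆ B ∧ ∀ p ∈ G, p.1 ∉ fv t ∧ ∀ q ∈ B \ G, p.1 ∉ fv q.2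

/-- there is a maximal removable set `G` of bindings (it exists
because removable sets are closed under union), and after eagerly removing
`G` from the top letrec no further (gc) step is applicable: the only
removable subset of the remaining bindings `B \ G` is the empty set. -/
theorem eager_gc_leaves_no_garbage
    (fv : E → Finset Var) (B : Finset (Var × E)) (t : E)
    (hdist : ∀ p ∈ B, ∀ q ∈ B, p.1 = q.1 → p = q) :
    (∀ G₁ G₂, Removable fv B t G₁ → Removable fv B t G₂ →
      Removable fv B t (G₁ ∪ G₂)) ∧
    ∃ G, Removable fv B t G ∧ (∀ G', Removable fv B t G' → G' ⊆ G) ∧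
      ∀ H, Removable fv (B \ G) t H → H = ∅ := by
  classical
  have hunion : ∀ G₁ G₂, Removable fv B t G₁ → Removable fv B t G₂ →
      Removable fv B t (G₁ ∪ G₂) := by
    intro G₁ G₂ h₁ h₂
    refine ⟨Finset.union_subset h₁.1 h₂.1, ?_⟩
    intro p hp
    rcases Finset.mem_union.1 hp with hp1 | hp2
    · refine ⟨(h₁.2 p hp1).1, ?_⟩
      intro q hq
      have hq' : q ∈ B \ G₁ := by
        simp only [Finset.mem_sdiff, Finset.mem_union] at hq ⊢
        exact ⟨hq.1, fun h => hq.2 (Or.inl h)⟩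
      exact (h₁.2 p hp1).2 q hq'
    · refine ⟨(h₂.2 p hp2).1, ?_⟩
      intro q hq
      have hq' : q ∈ B \ G₂ := by
        simp only [Finset.mem_sdiff, Finset.mem_union] at hq ⊢
        exact ⟨hq.1, fun h => hq.2 (Or.inr h)⟩
      exact (h₂.2 p hp2).2 q hq'
  refine ⟨hunion, ?_⟩
  set G : Finset (Var × E) :=
    (B.powerset.filter (fun G => Removable fv B t G)).sup id with hG
  have hempty : Removable fv B t ∅ := by
    refine ⟨Finset.empty_subset _, ?_⟩
    intro p hp; simp at hp
  have hGrem : Removable fv B t G := by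
    refine Finset.sup_induction hempty (fun a ha b hb => hunion a b ha hb) ?_
    intro i hi
    exact (Finset.mem_filter.1 hi).2
  have hmax : ∀ G', Removable fv B t G' → G' ⊆ G := by
    intro G' hG'
    have : G' ∈ B.powerset.filter (fun G => Removable fv B t G) :=
      Finset.mem_filter.2 ⟨Finset.mem_powerset.2 hG'.1, hG'⟩
    exact Finset.le_sup (f := id) this
  refine ⟨G, hGrem, hmax, ?_⟩
  intro H hH
  have hrem : Removable fv B t (G ∪ H) := by
    refine ⟨Finset.union_subset hGrem.1 (hH.1.trans (Finset.sdiff_subset)), ?_⟩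
    intro p hp
    rcases Finset.mem_union.1 hp with hp1 | hp2
    · refine ⟨(hGrem.2 p hp1).1, ?_⟩
      intro q hq
      have hq' : q ∈ B \ G := by
        simp only [Finset.mem_sdiff, Finset.mem_union] at hq ⊢
        exact ⟨hq.1, fun h => hq.2 (Or.inl h)⟩
      exact (hGrem.2 p hp1).2 q hq'
    · refine ⟨(hH.2 p hp2).1, ?_⟩
      intro q hq
      have hq' : q ∈ (B \ G) \ H := by
        simp only [Finset.mem_sdiff, Finset.mem_union, not_or] at hq ⊢
        exact ⟨⟨hq.1, hq.2.1⟩, hq.2.2⟩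
      exact (hH.2 p hp2).2 q hq'
  have hsub : H ⊆ G := (Finset.union_subset_iff.1 (hmax _ hrem)).2
  have hsub2 : H ⊆ B \ G := hH.1
  ext x
  simp only [Finset.notMem_empty, iff_false]
  intro hx
  exact (Finset.mem_sdiff.1 (hsub2 hx)).2 (hsub hx)
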